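/- arXiv:1406.0452 — 3 statements merged into one kernel-verified Lean document; each statement's English description precedes it below -/
import Mathlib

section
/- With the setup of Lemma 1.4, the scalar $\lambda_E \in K \setminus \{0\}$ with $T_{w_0} = \lambda_E \sigma_E$ on $E_v$ is a power of $v$: $\lambda_E = v^{n_E}$ for some integer $n_E$. -/
noncomputable section

/-- The field `K = ℂ(v)` of rational functions. -/
abbrev KK := RatFunc ℂ

/-- `x ∈ K` lies in `ℂ[v,v⁻¹]`. -/
def IsLaurent (x : KK) : Prop :=
  ∃ (p : Polynomial ℂ) (n : ℕ),
    x * RatFunc.X ^ n = algebraMap (Polynomial ℂ) KK p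

/-- A datum packaging the Iwahori–Hecke algebra `𝓗_K` over `K = ℂ(v)` of a
finite Coxeter system `(W,S)` with weight function `L` and longest element
`w0`, in Lusztig's P1–P15 framework. -/
structure HKDatum {B W : Type} [Group W] [Fintype W] [DecidableEq W]
    {M : CoxeterMatrix B} (cs : CoxeterSystem M W) (w0 : W) where
  /-- The weight function. -/
  L : W → ℕ
  weight : ∀ w w' : W, cs.length (w * w') = cs.length w + cs.length w' →
    L (w * w') = L w + L w'
  Lpos : ∀ i : B, 0 < L (cs.simple i)
  w0_sq : w0 * w0 = 1
  w0_long : ∀ w : W, cs.length (w0 * w) = cs.length w0 - cs.length w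
  /-- The underlying module of the Hecke algebra over `K`. -/
  HK : Type
  [ringHK : Ring HK]
  [algHK : Algebra KK HK]
  /-- The standard basis `T_x`. -/
  TK : W → HK
  basisTK : Module.Basis W KK HK
  basisTK_eq : ∀ w : W, basisTK w = TK w
  TK_mul : ∀ w w' : W, cs.length (w * w') = cs.length w + cs.length w' →
    TK w * TK w' = TK (w * w')
  TK_quad : ∀ i : B,
    (TK (cs.simple i) - ((RatFunc.X : KK) ^ (L (cs.simple i) : ℤ)) • (1 : HK)) *
      (TK (cs.simple i) + ((RatFunc.X : KK) ^ (-(L (cs.simple i) : ℤ))) • (1 : HK)) = 0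
  TK_unit : ∀ w : W, IsUnit (TK w)

attribute [instance] HKDatum.ringHK HKDatum.algHK


set_option synthInstance.maxHeartbeats 1000000 in
set_option maxHeartbeats 1000000 in
/-- Lemma 1.6: the scalar `λ_E` with `T_{w₀} = λ_E σ_E` on `E_v`
is a power of `v`: `λ_E = v^{n_E}` for some `n_E ∈ ℤ`. The key facts from the
setup are that `tr(σ_E h, E_v) ∈ ℂ[v,v⁻¹]` for all `h ∈ 𝓗`, and that
`λ_E|_{v=1} = 1`. -/
theorem statement6 {B W : Type} [Group W] [Fintype W] [DecidableEq W]
    {M : CoxeterMatrix B} (cs : CoxeterSystem M W) (w0 : W)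
    (D : HKDatum cs w0)
    (V : Type) [AddCommGroup V] [Module KK V] [FiniteDimensional KK V]
    [Nontrivial V]
    (act : D.HK →ₐ[KK] Module.End KK V)
    (hsimple : ∀ p : Submodule KK V,
      (∀ (h : D.HK), ∀ x ∈ p, act h x ∈ p) → p = ⊥ ∨ p = ⊤)
    (σE : Module.End KK V) (hσsq : σE * σE = 1)
    (hσ : ∀ w : W, σE * act (D.TK w) = act (D.TK (w0 * w * w0)) * σE)
    (lam : KK) (hlam0 : lam ≠ 0) (hlam : act (D.TK w0) = lam • σE)
    (htr : ∀ h : D.HK, IsLaurent (LinearMap.trace KK V (σE * act h)))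
    (hden : Polynomial.eval 1 lam.denom ≠ 0)
    (hv1 : RatFunc.eval (RingHom.id ℂ) 1 lam = 1) :
    ∃ n : ℤ, lam = (RatFunc.X : KK) ^ n := by
  classical
  haveI : CharZero KK := by
    refine charZero_of_injective_algebraMap (R := ℂ) ?_
    rw [IsScalarTower.algebraMap_eq ℂ (Polynomial ℂ) KK, Polynomial.algebraMap_eq]
    exact (RatFunc.algebraMap_injective ℂ).comp Polynomial.C_injective
  set d : ℕ := Module.finrank KK V with hd
  have hd0 : ((d : ℂ)) ≠ 0 := Nat.cast_ne_zero.mpr Module.finrank_pos.ne'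
  set dK : KK := (d : KK) with hdK
  have hdK0 : dK ≠ 0 := Nat.cast_ne_zero.mpr Module.finrank_pos.ne'
  set pd : Polynomial ℂ := Polynomial.C ((d : ℂ)) with hpd
  have hmapd : algebraMap (Polynomial ℂ) KK pd = dK := by
    rw [hpd, Polynomial.C_eq_natCast]
    exact map_natCast _ d
  -- first trace fact: tr(σE ∘ T_{w0}) = lam * d
  have tr1 : LinearMap.trace KK V (σE * act (D.TK w0)) = lam * dK := by
    rw [hlam, mul_smul_comm, hσsq, map_smul, LinearMap.trace_one, smul_eq_mul]
  obtain ⟨p, n, hp⟩ := htr (D.TK w0)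
  rw [tr1] at hp
  -- the inverse of T_{w0} acts as lam⁻¹ • σE
  obtain ⟨u, hu⟩ := D.TK_unit w0
  have hau : act ↑u = lam • σE := by rw [hu, hlam]
  have hauinv : act ↑u⁻¹ = lam⁻¹ • σE := by
    have h1 : (lam⁻¹ • σE) * act ↑u = 1 := by
      rw [hau, smul_mul_assoc, mul_smul_comm, smul_smul, inv_mul_cancel₀ hlam0, one_smul, hσsq]
    have h2 : act ↑u * act ↑u⁻¹ = 1 := by
      rw [← map_mul, Units.mul_inv, map_one]
    calc act ↑u⁻¹ = 1 * act ↑u⁻¹ := (one_mul _).symm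
      _ = (lam⁻¹ • σE) * act ↑u * act ↑u⁻¹ := by rw [h1]
      _ = (lam⁻¹ • σE) * (act ↑u * act ↑u⁻¹) := mul_assoc _ _ _
      _ = lam⁻¹ • σE := by rw [h2, mul_one]
  -- second trace fact: tr(σE ∘ T_{w0}⁻¹) = lam⁻¹ * d
  have tr2 : LinearMap.trace KK V (σE * act ↑u⁻¹) = lam⁻¹ * dK := by
    rw [hauinv, mul_smul_comm, hσsq, map_smul, LinearMap.trace_one, smul_eq_mul]
  obtain ⟨q, m, hq⟩ := htr ↑u⁻¹
  rw [tr2] at hq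
  -- p * q = d² X^(n+m), so p divides a power of X
  have hpq : p * q = pd * pd * Polynomial.X ^ (n + m) := by
    apply RatFunc.algebraMap_injective ℂ
    rw [map_mul, ← hp, ← hq, map_mul, map_mul, map_pow, hmapd, RatFunc.algebraMap_X]
    field_simp
    ring
  have hdvd : p ∣ Polynomial.X ^ (n + m) := by
    have hunit : IsUnit (pd * pd) :=
      ((Polynomial.isUnit_C.mpr (isUnit_iff_ne_zero.mpr hd0)).mul
        (Polynomial.isUnit_C.mpr (isUnit_iff_ne_zero.mpr hd0)))
    exact (hunit.dvd_mul_left).mp (hpq ▸ dvd_mul_right p q)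
  obtain ⟨k, hk, hassoc⟩ := (dvd_prime_pow Polynomial.prime_X (n + m)).mp hdvd
  obtain ⟨w, hw⟩ := hassoc
  obtain ⟨e, he, hce⟩ := Polynomial.isUnit_iff.mp w.isUnit
  -- cross-multiply lam = num/denom through hp, multiplied by C e
  have hdenK : algebraMap (Polynomial ℂ) KK lam.denom ≠ 0 :=
    RatFunc.algebraMap_ne_zero (RatFunc.denom_ne_zero lam)
  have hnum : lam * algebraMap (Polynomial ℂ) KK lam.denom
      = algebraMap (Polynomial ℂ) KK lam.num :=
    ((div_eq_iff hdenK).mp (RatFunc.num_div_denom lam)).symm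
  have hpe : algebraMap (Polynomial ℂ) KK p * algebraMap (Polynomial ℂ) KK (Polynomial.C e)
      = (RatFunc.X : KK) ^ k := by
    rw [← map_mul, hce, hw, map_pow, RatFunc.algebraMap_X]
  have hpoly : lam.num * pd * Polynomial.X ^ n * Polynomial.C e
      = Polynomial.X ^ k * lam.denom := by
    apply RatFunc.algebraMap_injective ℂ
    simp only [map_mul, map_pow, RatFunc.algebraMap_X, hmapd]
    rw [← hnum]
    linear_combination (algebraMap (Polynomial ℂ) KK lam.denom
        * algebraMap (Polynomial ℂ) KK (Polynomial.C e)) * hp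
      + algebraMap (Polynomial ℂ) KK lam.denom * hpe
  -- evaluate everything at 1
  have hv1' : lam.num.eval 1 = lam.denom.eval 1 := by
    unfold RatFunc.eval at hv1
    rw [Polynomial.eval₂_at_one, Polynomial.eval₂_at_one, RingHom.id_apply,
      RingHom.id_apply, div_eq_one_iff_eq hden] at hv1
    exact hv1
  have heval : lam.denom.eval 1 * ((d : ℂ) * e) = lam.denom.eval 1 * 1 := by
    have := congrArg (Polynomial.eval 1) hpoly
    simp only [Polynomial.eval_mul, Polynomial.eval_pow, Polynomial.eval_X,
      Polynomial.eval_C, hpd, one_pow, mul_one, one_mul] at this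
    rw [hv1'] at this
    rw [mul_one]
    linear_combination this
  have hde : (d : ℂ) * e = 1 := mul_left_cancel₀ hden heval
  -- conclude lam * X^n = X^k
  have hone : dK * algebraMap (Polynomial ℂ) KK (Polynomial.C e) = 1 := by
    rw [← hmapd, ← map_mul, hpd, ← Polynomial.C_mul, hde, Polynomial.C_1, map_one]
  have hfin : lam * (RatFunc.X : KK) ^ n = (RatFunc.X : KK) ^ k := by
    linear_combination algebraMap (Polynomial ℂ) KK (Polynomial.C e) * hp + hpe
      - (lam * (RatFunc.X : KK) ^ n) * hone
  refine ⟨(k : ℤ) - (n : ℤ), ?_⟩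
  rw [zpow_sub₀ RatFunc.X_ne_zero, zpow_natCast, zpow_natCast,
    eq_div_iff (pow_ne_zero n RatFunc.X_ne_zero)]
  exact hfin

end
end

section
/- Let $E$ be a simple $\mathbb{C}[W]$-module and $E^{\dagger}$ the simple module with the same underlying space but with $w \in W$ acting by $(-1)^{l(w)}$ times its action on $E$. There exists a sign $\epsilon_E \in \{1, -1\}$ such that for every $x \in W$, $\mathrm{tr}(\sigma_{E^{\dagger}} T_x, (E^{\dagger})_v) = \epsilon_E (-1)^{l(x)} \mathrm{tr}(\sigma_E T_{x^{-1}}^{-1}, E_v)$. -/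
noncomputable section

set_option synthInstance.maxHeartbeats 1000000 in
set_option maxHeartbeats 1000000 in
/-- Lemma 1.7: there is a sign `ε_E ∈ {±1}` such that for all
`x ∈ W`, `tr(σ_{E^†} T_x, (E^†)_v) = ε_E (-1)^{l(x)} tr(σ_E T_{x⁻¹}⁻¹, E_v)`.
Here `V` plays the role of `E_v`, `V'` of `(E^†)_v`, `dag` is the
automorphism `T_x ↦ (-1)^{l(x)} T_{x⁻¹}⁻¹` of `𝓗_K`, and `b` realizes the
isomorphism `(E_v)^† ≅ (E^†)_v`. -/
theorem statement7 {B W : Type} [Group W] [Fintype W] [DecidableEq W]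
    {M : CoxeterMatrix B} (cs : CoxeterSystem M W) (w0 : W)
    (D : HKDatum cs w0)
    (dag : D.HK ≃ₐ[KK] D.HK)
    (hdag : ∀ x : W, dag (D.TK x) =
      ((-1 : ℤ) ^ cs.length x) • (((D.TK_unit x⁻¹).unit⁻¹ : D.HKˣ) : D.HK))
    (V : Type) [AddCommGroup V] [Module KK V] [FiniteDimensional KK V]
    [Nontrivial V]
    (act : D.HK →ₐ[KK] Module.End KK V)
    (hsimple : ∀ p : Submodule KK V,
      (∀ (h : D.HK), ∀ x ∈ p, act h x ∈ p) → p = ⊥ ∨ p = ⊤)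
    (σE : Module.End KK V) (hσsq : σE * σE = 1)
    (hσ : ∀ w : W, σE * act (D.TK w) = act (D.TK (w0 * w * w0)) * σE)
    (V' : Type) [AddCommGroup V'] [Module KK V'] [FiniteDimensional KK V']
    [Nontrivial V']
    (act' : D.HK →ₐ[KK] Module.End KK V')
    (hsimple' : ∀ p : Submodule KK V',
      (∀ (h : D.HK), ∀ x ∈ p, act' h x ∈ p) → p = ⊥ ∨ p = ⊤)
    (hschur' : ∀ f : Module.End KK V',
      (∀ h : D.HK, f * act' h = act' h * f) →
        ∃ c : KK, f = c • (1 : Module.End KK V'))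
    (σE' : Module.End KK V') (hσsq' : σE' * σE' = 1)
    (hσ' : ∀ w : W, σE' * act' (D.TK w) = act' (D.TK (w0 * w * w0)) * σE')
    (b : V ≃ₗ[KK] V')
    (hb : ∀ (h : D.HK) (e : V), b (act (dag h) e) = act' h (b e)) :
    ∃ ε : ℤ, (ε = 1 ∨ ε = -1) ∧ ∀ x : W,
      LinearMap.trace KK V' (σE' * act' (D.TK x)) =
        (ε : KK) * (-1 : KK) ^ cs.length x *
          LinearMap.trace KK V
            (σE * act (((D.TK_unit x⁻¹).unit⁻¹ : D.HKˣ) : D.HK)) := by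
  classical
  -- basic length / w0 facts
  have hw0inv : w0⁻¹ = w0 := by
    rw [inv_eq_iff_mul_eq_one, D.w0_sq]
  have hlen_le : ∀ w : W, cs.length w ≤ cs.length w0 := by
    intro w
    have h2 := D.w0_long (w0 * w)
    rw [← mul_assoc, D.w0_sq, one_mul] at h2
    omega
  have hlen_conj : ∀ w : W, cs.length (w0 * w * w0) = cs.length w := by
    intro w
    have h1 : cs.length (w * w0) = cs.length w0 - cs.length w := by
      rw [← cs.length_inv, mul_inv_rev, hw0inv, D.w0_long w⁻¹, cs.length_inv]
    have h2 := D.w0_long (w * w0)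
    rw [← mul_assoc] at h2
    rw [h2, h1]
    have := hlen_le w
    omega
  -- conj is multiplicative
  have conj_mul : ∀ f g : Module.End KK V,
      b.conj (f * g) = b.conj f * b.conj g := by
    intro f g
    ext x
    simp [LinearEquiv.conj_apply, Module.End.mul_apply]
  have conj_one : b.conj (1 : Module.End KK V) = 1 := by
    ext x
    simp [LinearEquiv.conj_apply]
  -- inverses of act of units
  have act_inv : ∀ w : W,
      act (((D.TK_unit w).unit⁻¹ : D.HKˣ) : D.HK) * act (D.TK w) = 1 ∧
      act (D.TK w) * act (((D.TK_unit w).unit⁻¹ : D.HKˣ) : D.HK) = 1 := by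
    intro w
    have e1 := Units.inv_mul (D.TK_unit w).unit
    have e2 := Units.mul_inv (D.TK_unit w).unit
    rw [IsUnit.unit_spec] at e1 e2
    have h1 := congrArg act e1
    have h2 := congrArg act e2
    rw [map_mul, map_one] at h1 h2
    exact ⟨h1, h2⟩
  -- key intertwining fact on V
  have factB : ∀ w : W,
      σE * act (dag (D.TK w)) = act (dag (D.TK (w0 * w * w0))) * σE := by
    intro w
    rw [hdag w, hdag (w0 * w * w0)]
    have hinv : (w0 * w * w0)⁻¹ = w0 * w⁻¹ * w0 := by
      simp [mul_inv_rev, hw0inv, mul_assoc]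
    rw [hinv, hlen_conj w, map_zsmul, map_zsmul, mul_smul_comm, smul_mul_assoc]
    congr 1
    obtain ⟨-, ha2⟩ := act_inv w⁻¹
    obtain ⟨hb1, -⟩ := act_inv (w0 * w⁻¹ * w0)
    have key := hσ w⁻¹
    set ai := act (((D.TK_unit w⁻¹).unit⁻¹ : D.HKˣ) : D.HK) with hai
    set bi := act (((D.TK_unit (w0 * w⁻¹ * w0)).unit⁻¹ : D.HKˣ) : D.HK) with hbi
    have e1 : act (D.TK (w0 * w⁻¹ * w0)) * (σE * ai) = σE := by
      rw [← mul_assoc, ← key, mul_assoc, ha2, mul_one]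
    calc σE * ai = 1 * (σE * ai) := (one_mul _).symm
      _ = (bi * act (D.TK (w0 * w⁻¹ * w0))) * (σE * ai) := by rw [hb1]
      _ = bi * (act (D.TK (w0 * w⁻¹ * w0)) * (σE * ai)) := by rw [mul_assoc]
      _ = bi * σE := by rw [e1]
  -- act' in terms of act and conj
  have act'_eq : ∀ h : D.HK, act' h = b.conj (act (dag h)) := by
    intro h
    ext x
    rw [LinearEquiv.conj_apply_apply, hb]
    simp
  set τ : Module.End KK V' := b.conj σE with hτdef
  have hτsq : τ * τ = 1 := by
    rw [hτdef, ← conj_mul, hσsq, conj_one]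
  have hτcomm : ∀ w : W,
      τ * act' (D.TK w) = act' (D.TK (w0 * w * w0)) * τ := by
    intro w
    rw [act'_eq, act'_eq, hτdef, ← conj_mul, ← conj_mul, factB]
  have hfcomm_basis : ∀ w : W,
      (σE' * τ) * act' (D.TK w) = act' (D.TK w) * (σE' * τ) := by
    intro w
    have hww : w0 * (w0 * w * w0) * w0 = w := by
      have : w0 * (w0 * w * w0) * w0 = (w0 * w0) * w * (w0 * w0) := by group
      rw [this, D.w0_sq, one_mul, mul_one]
    calc (σE' * τ) * act' (D.TK w) = σE' * (τ * act' (D.TK w)) := mul_assoc _ _ _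
      _ = σE' * (act' (D.TK (w0 * w * w0)) * τ) := by rw [hτcomm]
      _ = (σE' * act' (D.TK (w0 * w * w0))) * τ := (mul_assoc _ _ _).symm
      _ = (act' (D.TK (w0 * (w0 * w * w0) * w0)) * σE') * τ := by rw [hσ']
      _ = (act' (D.TK w) * σE') * τ := by rw [hww]
      _ = act' (D.TK w) * (σE' * τ) := mul_assoc _ _ _
  have hfcomm : ∀ h : D.HK, (σE' * τ) * act' h = act' h * (σE' * τ) := by
    intro h
    have hFG : (LinearMap.mulLeft KK (σE' * τ)).comp act'.toLinearMap =
        (LinearMap.mulRight KK (σE' * τ)).comp act'.toLinearMap := by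
      apply D.basisTK.ext
      intro w
      simp only [LinearMap.comp_apply, AlgHom.toLinearMap_apply, D.basisTK_eq,
        LinearMap.mulLeft_apply, LinearMap.mulRight_apply]
      exact hfcomm_basis w
    have := congrArg (fun F => F h) hFG
    simpa [mul_assoc] using this
  obtain ⟨c, hc⟩ := hschur' (σE' * τ) hfcomm
  have hσE'_eq : σE' = c • τ := by
    calc σE' = σE' * (τ * τ) := by rw [hτsq, mul_one]
      _ = (σE' * τ) * τ := by rw [mul_assoc]
      _ = (c • 1) * τ := by rw [hc]
      _ = c • τ := by rw [smul_mul_assoc, one_mul]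
  have hcc : c * c = 1 := by
    have h1 : (c * c) • (τ * τ) = (1 : Module.End KK V') := by
      rw [← smul_mul_smul_comm, ← hσE'_eq, hσsq']
    rw [hτsq] at h1
    obtain ⟨v0, hv0⟩ := exists_ne (0 : V')
    have h2 := congrFun (congrArg (fun (f : Module.End KK V') => (f : V' → V')) h1) v0
    simp only [LinearMap.smul_apply, Module.End.one_apply] at h2
    have h3 : (c * c - 1) • v0 = 0 := by
      rw [sub_smul, one_smul, h2, sub_self]
    rcases smul_eq_zero.mp h3 with h | h
    · exact sub_eq_zero.mp h
    · exact absurd h hv0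
  -- main trace identity
  have main : ∀ x : W,
      LinearMap.trace KK V' (σE' * act' (D.TK x)) =
        c * (-1 : KK) ^ cs.length x *
          LinearMap.trace KK V
            (σE * act (((D.TK_unit x⁻¹).unit⁻¹ : D.HKˣ) : D.HK)) := by
    intro x
    have e1 : σE' * act' (D.TK x) = c • (b.conj (σE * act (dag (D.TK x)))) := by
      rw [hσE'_eq, act'_eq, hτdef, smul_mul_assoc, ← conj_mul]
    rw [e1, map_smul, LinearMap.trace_conj', hdag x, map_zsmul, mul_smul_comm,
      ← Int.cast_smul_eq_zsmul KK, map_smul, smul_eq_mul, smul_eq_mul]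
    push_cast
    ring
  obtain hc1 | hc1 := mul_self_eq_one_iff.mp hcc
  · refine ⟨1, Or.inl rfl, fun x => ?_⟩
    rw [main x, hc1]
    push_cast
    ring
  · refine ⟨-1, Or.inr rfl, fun x => ?_⟩
    rw [main x, hc1]
    push_cast
    ring


end
end

section
/- Let $E$ be a simple $\mathbb{C}[W]$-module and $n_E$ the integer with $T_{w_0} = v^{n_E} \sigma_E$ on $E_v$. Then $n_E = -\mathbf{a}_E + \mathbf{a}_{E^{\dagger}}$, where $\mathbf{a}_E$ is the $a$-invariant of $E$ (the unique integer with $f_{E_v} = f_0 v^{-2\mathbf{a}_E} + $ strictly higher powers of $v$, $f_0 \neq 0$, for the generic degree $f_{E_v}$). -/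
noncomputable section

section Aux

set_option synthInstance.maxHeartbeats 1000000
set_option maxHeartbeats 1000000

variable {B W : Type} [Group W] [Fintype W] [DecidableEq W]
    {M : CoxeterMatrix B} {cs : CoxeterSystem M W} {w0 : W} (D : HKDatum cs w0)

include D

lemma TK_one : D.TK 1 = 1 := by
  have h := D.TK_mul 1 1 (by simp)
  rw [one_mul] at h
  have := (D.TK_unit 1).mul_left_cancel (a := D.TK 1) (b := D.TK 1) (c := 1)
    (by rw [h, mul_one])
  exact this

lemma len_le (w : W) : cs.length w ≤ cs.length w0 := by
  have e : w0 * (w0 * w) = w := by rw [← mul_assoc, D.w0_sq, one_mul]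
  have h1 := D.w0_long (w0 * w)
  rw [e] at h1
  omega

lemma len_add (w : W) : cs.length (w0 * w) + cs.length w = cs.length w0 := by
  have := D.w0_long w
  have := len_le D w
  omega

lemma TK_mul_w0 (x : W) : D.TK (w0 * x⁻¹) * D.TK x = D.TK w0 := by
  have e : (w0 * x⁻¹) * x = w0 := by group
  have hl : cs.length ((w0 * x⁻¹) * x) = cs.length (w0 * x⁻¹) + cs.length x := by
    rw [e]
    have := len_add D x⁻¹
    rw [cs.length_inv] at this
    omega
  rw [D.TK_mul _ _ hl, e]

lemma TK_sq (i : B) :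
    D.TK (cs.simple i) * D.TK (cs.simple i) =
      1 + (((RatFunc.X : KK) ^ (D.L (cs.simple i) : ℤ)
        - (RatFunc.X : KK) ^ (-(D.L (cs.simple i) : ℤ)))) • D.TK (cs.simple i) := by
  have h := D.TK_quad i
  set a : ℤ := (D.L (cs.simple i) : ℤ) with ha
  set T := D.TK (cs.simple i) with hT
  have hX : (RatFunc.X : KK) ≠ 0 := RatFunc.X_ne_zero
  have hxx : ((RatFunc.X : KK) ^ a) * ((RatFunc.X : KK) ^ (-a)) = 1 := by
    rw [← zpow_add₀ hX]; simp
  simp only [sub_mul, mul_add, smul_mul_assoc, mul_smul_comm, smul_smul, one_mul, mul_one,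
    hxx, one_smul, sub_smul] at h ⊢
  rw [smul_sub, smul_smul, mul_comm ((RatFunc.X:KK) ^ (-a)), hxx, one_smul] at h
  linear_combination (norm := abel) h

/-- left multiplication rule -/
lemma key1 (i : B) (x : W) :
    D.TK (cs.simple i) * D.TK x = D.TK (cs.simple i * x) +
      (if cs.length (cs.simple i * x) < cs.length x then
        (((RatFunc.X : KK) ^ (D.L (cs.simple i) : ℤ)
          - (RatFunc.X : KK) ^ (-(D.L (cs.simple i) : ℤ)))) • D.TK x else 0) := by
  set s := cs.simple i with hs
  by_cases hd : cs.length (s * x) < cs.length x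
  · have hxlen : cs.length (s * x) + 1 = cs.length x := (cs.isLeftDescent_iff).mp hd
    have e : s * (s * x) = x := by rw [← mul_assoc, cs.simple_mul_simple_self, one_mul]
    have hsx : D.TK s * D.TK (s * x) = D.TK x := by
      rw [D.TK_mul s (s * x) (by rw [e, cs.length_simple]; omega), e]
    have : D.TK s * D.TK x = D.TK s * (D.TK s * D.TK (s * x)) := by rw [hsx]
    rw [this, ← mul_assoc, TK_sq D i, add_mul, one_mul, smul_mul_assoc, hsx, if_pos hd]
  · have hxlen : cs.length (s * x) = cs.length x + 1 := (cs.not_isLeftDescent_iff).mp hd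
    rw [D.TK_mul s x (by rw [hxlen, cs.length_simple]; omega), if_neg hd, add_zero]

/-- right multiplication rule -/
lemma key2 (i : B) (x : W) :
    D.TK x⁻¹ * D.TK (cs.simple i) = D.TK (cs.simple i * x)⁻¹ +
      (if cs.length (cs.simple i * x) < cs.length x then
        (((RatFunc.X : KK) ^ (D.L (cs.simple i) : ℤ)
          - (RatFunc.X : KK) ^ (-(D.L (cs.simple i) : ℤ)))) • D.TK x⁻¹ else 0) := by
  set s := cs.simple i with hs
  have einv : (s * x)⁻¹ = x⁻¹ * s := by rw [mul_inv_rev, cs.inv_simple]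
  by_cases hd : cs.length (s * x) < cs.length x
  · have hxlen : cs.length (s * x) + 1 = cs.length x := (cs.isLeftDescent_iff).mp hd
    have e : (s * x)⁻¹ * s = x⁻¹ := by rw [einv, mul_assoc, cs.simple_mul_simple_self, mul_one]
    have h1 : D.TK (s * x)⁻¹ * D.TK s = D.TK x⁻¹ := by
      rw [D.TK_mul _ s (by rw [e, cs.length_inv, cs.length_inv, cs.length_simple]; omega), e]
    have : D.TK x⁻¹ * D.TK s = D.TK (s * x)⁻¹ * (D.TK s * D.TK s) := by
      rw [← mul_assoc, h1]
    rw [this, TK_sq D i, mul_add, mul_one, mul_smul_comm, h1, if_pos hd]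
  · have hxlen : cs.length (s * x) = cs.length x + 1 := (cs.not_isLeftDescent_iff).mp hd
    have hl : cs.length (x⁻¹ * s) = cs.length x⁻¹ + cs.length s := by
      rw [← einv, cs.length_inv, cs.length_inv, cs.length_simple, hxlen]
    rw [D.TK_mul x⁻¹ s hl, if_neg hd, add_zero, einv]

variable (V : Type) [AddCommGroup V] [Module KK V] (act : D.HK →ₐ[KK] Module.End KK V)

def Sfun (C D' : Module.End KK V) : KK :=
  ∑ x : W, LinearMap.trace KK V (C * act (D.TK x)) *
    LinearMap.trace KK V (act (D.TK x⁻¹) * D')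

lemma Sfun_simple (i : B) (C D' : Module.End KK V) :
    Sfun D V act (C * act (D.TK (cs.simple i))) D' =
    Sfun D V act C (act (D.TK (cs.simple i)) * D') := by
  set ξ : KK := ((RatFunc.X : KK) ^ (D.L (cs.simple i) : ℤ)
    - (RatFunc.X : KK) ^ (-(D.L (cs.simple i) : ℤ))) with hξ
  set tr : Module.End KK V →ₗ[KK] KK := LinearMap.trace KK V with htr
  set u : W → KK := fun x => tr (C * act (D.TK x)) * tr (act (D.TK x⁻¹) * D') with hu
  set A : W → KK := fun x =>
    tr (C * act (D.TK (cs.simple i * x))) * tr (act (D.TK x⁻¹) * D') with hA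
  set r : W → KK := fun x =>
    tr (C * act (D.TK x)) * tr (act (D.TK (cs.simple i * x)⁻¹) * D') with hr
  set ite1 : W → KK := fun x =>
    if cs.length (cs.simple i * x) < cs.length x then ξ * u x else 0 with hite
  have lhs_eq : Sfun D V act (C * act (D.TK (cs.simple i))) D' = ∑ x : W, (A x + ite1 x) := by
    unfold Sfun
    apply Finset.sum_congr rfl
    intro x _
    rw [mul_assoc, ← map_mul act, key1 D i x]
    by_cases hd : cs.length (cs.simple i * x) < cs.length x
    · rw [hite]
      simp only [if_pos hd, map_add, map_smul, mul_add, mul_smul_comm, hA, hu]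
      rw [add_mul, smul_eq_mul]
      ring
    · rw [hite]
      simp only [if_neg hd, add_zero, hA, htr]
  have rhs_eq : Sfun D V act C (act (D.TK (cs.simple i)) * D') = ∑ x : W, (r x + ite1 x) := by
    unfold Sfun
    apply Finset.sum_congr rfl
    intro x _
    rw [← mul_assoc (act (D.TK x⁻¹)), ← map_mul act, key2 D i x]
    by_cases hd : cs.length (cs.simple i * x) < cs.length x
    · rw [hite]
      simp only [if_pos hd, map_add, map_smul, add_mul, smul_mul_assoc, hr, hu]
      rw [mul_add, smul_eq_mul]
      ring
    · rw [hite]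
      simp only [if_neg hd, add_zero, hr, htr]
  have reindex : ∑ x : W, A x = ∑ x : W, r x := by
    have hbij : Function.Bijective (fun x : W => cs.simple i * x) := by
      apply Function.Involutive.bijective
      intro x
      simp only [← mul_assoc, cs.simple_mul_simple_self, one_mul]
    refine Fintype.sum_bijective _ hbij A r ?_
    intro x
    simp only [hA, hr, ← mul_assoc, cs.simple_mul_simple_self, one_mul]
  rw [lhs_eq, rhs_eq, Finset.sum_add_distrib, Finset.sum_add_distrib, reindex]

lemma Sfun_word (w : W) (C D' : Module.End KK V) :
    Sfun D V act (C * act (D.TK w)) D' = Sfun D V act C (act (D.TK w) * D') := by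
  have main : ∀ n : ℕ, ∀ w : W, cs.length w ≤ n → ∀ C D' : Module.End KK V,
      Sfun D V act (C * act (D.TK w)) D' = Sfun D V act C (act (D.TK w) * D') := by
    intro n
    induction n with
    | zero =>
      intro w hw C D'
      have : w = 1 := cs.length_eq_zero_iff.mp (Nat.le_zero.mp hw)
      rw [this, TK_one D, map_one, mul_one, one_mul]
    | succ n ih =>
      intro w hw C D'
      by_cases h1 : w = 1
      · rw [h1, TK_one D, map_one, mul_one, one_mul]
      · obtain ⟨i, hi⟩ := cs.exists_leftDescent_of_ne_one h1
        have hlen : cs.length (cs.simple i * w) + 1 = cs.length w :=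
          (cs.isLeftDescent_iff).mp hi
        have e : cs.simple i * (cs.simple i * w) = w := by
          rw [← mul_assoc, cs.simple_mul_simple_self, one_mul]
        have hTw : D.TK (cs.simple i) * D.TK (cs.simple i * w) = D.TK w := by
          rw [D.TK_mul _ _ (by rw [e, cs.length_simple]; omega), e]
        rw [← hTw, map_mul, ← mul_assoc,
          ih (cs.simple i * w) (by omega) (C * act (D.TK (cs.simple i))) D',
          Sfun_simple, mul_assoc]
  exact main (cs.length w) w le_rfl C D'

lemma Sfun_smul_left (c : KK) (C D' : Module.End KK V) :
    Sfun D V act (c • C) D' = c * Sfun D V act C D' := by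
  unfold Sfun
  rw [Finset.mul_sum]
  apply Finset.sum_congr rfl
  intro x _
  rw [smul_mul_assoc, map_smul, smul_eq_mul]
  ring

lemma Sfun_smul_right (c : KK) (C D' : Module.End KK V) :
    Sfun D V act C (c • D') = c * Sfun D V act C D' := by
  unfold Sfun
  rw [Finset.mul_sum]
  apply Finset.sum_congr rfl
  intro x _
  rw [mul_smul_comm, map_smul, smul_eq_mul]
  ring

lemma Sσσ (σE : Module.End KK V) (hσsq : σE * σE = 1) (nE : ℤ)
    (hlam : act (D.TK w0) = ((RatFunc.X : KK) ^ nE) • σE) :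
    Sfun D V act σE σE = Sfun D V act 1 1 := by
  have hvne : ((RatFunc.X : KK) ^ nE) ≠ 0 := zpow_ne_zero _ RatFunc.X_ne_zero
  have hσ_eq : σE = ((RatFunc.X : KK) ^ nE)⁻¹ • act (D.TK w0) := by
    rw [hlam, smul_smul, inv_mul_cancel₀ hvne, one_smul]
  rw [hσ_eq, Sfun_smul_left, Sfun_smul_right]
  have h3 := Sfun_word D V act w0 1 (act (D.TK w0))
  rw [one_mul] at h3
  have h4 : act (D.TK w0) * act (D.TK w0) =
      ((RatFunc.X : KK) ^ nE * (RatFunc.X : KK) ^ nE) • (1 : Module.End KK V) := by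
    rw [hlam, smul_mul_assoc, mul_smul_comm, smul_smul, hσsq]
  rw [h3, h4, Sfun_smul_right]
  field_simp

omit D in
lemma endgame (fE fE' : KK) (nE : ℤ) (aE aE' : ℕ)
    (hrel : ((RatFunc.X : KK) ^ nE) * ((RatFunc.X : KK) ^ nE) * fE' = fE)
    (p p' : Polynomial ℂ) (hp0 : p.coeff 0 ≠ 0) (hp0' : p'.coeff 0 ≠ 0)
    (hp : fE * (RatFunc.X : KK) ^ (2 * aE) = algebraMap (Polynomial ℂ) KK p)
    (hp' : fE' * (RatFunc.X : KK) ^ (2 * aE') = algebraMap (Polynomial ℂ) KK p') :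
    nE = -(aE : ℤ) + aE' := by
  have hX : (RatFunc.X : KK) ≠ 0 := RatFunc.X_ne_zero
  set t : ℤ := nE + aE - aE' with ht
  have E1 : (RatFunc.X : KK) ^ nE * (RatFunc.X : KK) ^ nE *
      algebraMap (Polynomial ℂ) KK p' * (RatFunc.X : KK) ^ (2 * aE) =
      algebraMap (Polynomial ℂ) KK p * (RatFunc.X : KK) ^ (2 * aE') := by
    rw [← hp', ← hp, ← hrel]; ring
  have conv : (RatFunc.X : KK) ^ nE * (RatFunc.X : KK) ^ nE * (RatFunc.X : KK) ^ (2 * aE) =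
      (RatFunc.X : KK) ^ (2 * t) * (RatFunc.X : KK) ^ (2 * aE') := by
    rw [← zpow_natCast (RatFunc.X : KK) (2 * aE), ← zpow_natCast (RatFunc.X : KK) (2 * aE'),
      ← zpow_add₀ hX, ← zpow_add₀ hX, ← zpow_add₀ hX]
    congr 1
    push_cast
    omega
  have key : (RatFunc.X : KK) ^ (2 * t) * algebraMap (Polynomial ℂ) KK p' =
      algebraMap (Polynomial ℂ) KK p := by
    apply mul_right_cancel₀ (b := (RatFunc.X : KK) ^ (2 * aE')) (pow_ne_zero _ hX)
    calc (RatFunc.X : KK) ^ (2 * t) * algebraMap (Polynomial ℂ) KK p' *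
          (RatFunc.X : KK) ^ (2 * aE')
        = (RatFunc.X : KK) ^ (2*t) * (RatFunc.X : KK) ^ (2 * aE') *
          algebraMap (Polynomial ℂ) KK p' := by ring
      _ = (RatFunc.X : KK) ^ nE * (RatFunc.X : KK) ^ nE * (RatFunc.X : KK) ^ (2 * aE) *
          algebraMap (Polynomial ℂ) KK p' := by rw [conv]
      _ = algebraMap (Polynomial ℂ) KK p * (RatFunc.X : KK) ^ (2 * aE') := by
          rw [← E1]; ring
  rcases lt_trichotomy t 0 with h | h | h
  · exfalso
    have key2 : algebraMap (Polynomial ℂ) KK p' =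
        (RatFunc.X : KK) ^ ((-(2 * t)).toNat) * algebraMap (Polynomial ℂ) KK p := by
      have : ((RatFunc.X : KK) ^ ((-(2*t)).toNat) : KK) = (RatFunc.X : KK) ^ (-(2*t)) := by
        rw [← zpow_natCast (RatFunc.X : KK), Int.toNat_of_nonneg (by omega)]
      rw [this, ← key, ← mul_assoc, ← zpow_add₀ hX]
      norm_num
    rw [← RatFunc.algebraMap_X, ← map_pow, ← map_mul] at key2
    have hpp := RatFunc.algebraMap_injective ℂ key2
    have : p'.coeff 0 = 0 := by
      rw [Polynomial.coeff_zero_eq_eval_zero, hpp]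
      simp [Polynomial.eval_pow, zero_pow (by omega : (-(2*t)).toNat ≠ 0)]
    exact hp0' this
  · omega
  · exfalso
    have key2 : algebraMap (Polynomial ℂ) KK p =
        (RatFunc.X : KK) ^ ((2 * t).toNat) * algebraMap (Polynomial ℂ) KK p' := by
      have : ((RatFunc.X : KK) ^ ((2*t).toNat) : KK) = (RatFunc.X : KK) ^ (2*t) := by
        rw [← zpow_natCast (RatFunc.X : KK), Int.toNat_of_nonneg (by omega)]
      rw [this, key]
    rw [← RatFunc.algebraMap_X, ← map_pow, ← map_mul] at key2
    have hpp := RatFunc.algebraMap_injective ℂ key2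
    have : p.coeff 0 = 0 := by
      rw [Polynomial.coeff_zero_eq_eval_zero, hpp]
      simp [Polynomial.eval_pow, zero_pow (by omega : (2*t).toNat ≠ 0)]
    exact hp0 this

end Aux

set_option synthInstance.maxHeartbeats 1000000 in
set_option maxHeartbeats 1000000 in
/-- Lemma 1.8: `n_E = -𝐚_E + 𝐚_{E^†}`, where `v^{n_E}` is the
scalar with `T_{w₀} = v^{n_E} σ_E` on `E_v`, and `𝐚_E` is defined by the
lowest power `v^{-2𝐚_E}` in the generic degree `f_{E_v}` (here
`∑_x tr(T_x, E_v) tr(T_{x⁻¹}, E_v) = f_{E_v} dim E`). `V` plays the role of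
`E_v` and `V'` that of `(E^†)_v`, related via the automorphism `dag`. -/
theorem statement8 {B W : Type} [Group W] [Fintype W] [DecidableEq W]
    {M : CoxeterMatrix B} (cs : CoxeterSystem M W) (w0 : W)
    (D : HKDatum cs w0)
    (dag : D.HK ≃ₐ[KK] D.HK)
    (hdag : ∀ x : W, dag (D.TK x) =
      ((-1 : ℤ) ^ cs.length x) • (((D.TK_unit x⁻¹).unit⁻¹ : D.HKˣ) : D.HK))
    (V : Type) [AddCommGroup V] [Module KK V] [FiniteDimensional KK V]
    [Nontrivial V]
    (act : D.HK →ₐ[KK] Module.End KK V)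
    (hsimple : ∀ p : Submodule KK V,
      (∀ (h : D.HK), ∀ x ∈ p, act h x ∈ p) → p = ⊥ ∨ p = ⊤)
    (σE : Module.End KK V) (hσsq : σE * σE = 1)
    (hσ : ∀ w : W, σE * act (D.TK w) = act (D.TK (w0 * w * w0)) * σE)
    (nE : ℤ) (hlam : act (D.TK w0) = ((RatFunc.X : KK) ^ nE) • σE)
    (V' : Type) [AddCommGroup V'] [Module KK V'] [FiniteDimensional KK V']
    [Nontrivial V']
    (act' : D.HK →ₐ[KK] Module.End KK V')
    (hsimple' : ∀ p : Submodule KK V',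
      (∀ (h : D.HK), ∀ x ∈ p, act' h x ∈ p) → p = ⊥ ∨ p = ⊤)
    (σE' : Module.End KK V') (hσsq' : σE' * σE' = 1)
    (hσ' : ∀ w : W, σE' * act' (D.TK w) = act' (D.TK (w0 * w * w0)) * σE')
    (b : V ≃ₗ[KK] V')
    (hb : ∀ (h : D.HK) (e : V), b (act (dag h) e) = act' h (b e))
    (fE : KK)
    (hfE : ∑ x : W, LinearMap.trace KK V (act (D.TK x)) *
        LinearMap.trace KK V (act (D.TK x⁻¹)) =
      fE * (Module.finrank KK V : KK))
    (aE : ℕ)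
    (haE : ∃ p : Polynomial ℂ, p.coeff 0 ≠ 0 ∧
      fE * (RatFunc.X : KK) ^ (2 * aE) = algebraMap (Polynomial ℂ) KK p)
    (fE' : KK)
    (hfE' : ∑ x : W, LinearMap.trace KK V' (act' (D.TK x)) *
        LinearMap.trace KK V' (act' (D.TK x⁻¹)) =
      fE' * (Module.finrank KK V' : KK))
    (aE' : ℕ)
    (haE' : ∃ p : Polynomial ℂ, p.coeff 0 ≠ 0 ∧
      fE' * (RatFunc.X : KK) ^ (2 * aE') = algebraMap (Polynomial ℂ) KK p) :
    nE = -(aE : ℤ) + (aE' : ℤ) := by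
  have hX : (RatFunc.X : KK) ≠ 0 := RatFunc.X_ne_zero
  have hu : ((RatFunc.X : KK) ^ nE) ≠ 0 := zpow_ne_zero _ hX
  have hw0inv : w0⁻¹ = w0 := inv_eq_of_mul_eq_one_right D.w0_sq
  have hfin : Module.finrank KK V' = Module.finrank KK V := b.symm.finrank_eq
  -- traces on V' computed on V via dag
  have htr' : ∀ h : D.HK, LinearMap.trace KK V' (act' h) = LinearMap.trace KK V (act (dag h)) := by
    intro h
    have hconj : act' h = b.conj (act (dag h)) := by
      ext y
      rw [LinearEquiv.conj_apply_apply, hb, b.apply_symm_apply]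
    rw [hconj, LinearMap.trace_conj']
  -- inverse formula
  have hmulw : ∀ x : W, act (D.TK (w0 * x⁻¹)) * act (D.TK x) = act (D.TK w0) := by
    intro x
    rw [← map_mul, TK_mul_w0 D x]
  have hJ : ∀ x : W, act (((D.TK_unit x).unit⁻¹ : D.HKˣ) : D.HK) =
      ((RatFunc.X : KK) ^ nE)⁻¹ • (σE * act (D.TK (w0 * x⁻¹))) := by
    intro x
    have h1 : D.TK x * (((D.TK_unit x).unit⁻¹ : D.HKˣ) : D.HK) = 1 := by
      exact (D.TK_unit x).mul_val_inv
    have h2 : act (D.TK x) * act (((D.TK_unit x).unit⁻¹ : D.HKˣ) : D.HK) = 1 := by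
      rw [← map_mul, h1, map_one]
    have h3 : (((RatFunc.X : KK) ^ nE)⁻¹ • (σE * act (D.TK (w0 * x⁻¹)))) * act (D.TK x)
        = 1 := by
      rw [smul_mul_assoc, mul_assoc, hmulw x, hlam, mul_smul_comm, hσsq, smul_smul,
        inv_mul_cancel₀ hu, one_smul]
    calc act (((D.TK_unit x).unit⁻¹ : D.HKˣ) : D.HK)
        = ((((RatFunc.X : KK) ^ nE)⁻¹ • (σE * act (D.TK (w0 * x⁻¹)))) * act (D.TK x)) *
          act (((D.TK_unit x).unit⁻¹ : D.HKˣ) : D.HK) := by rw [h3, one_mul]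
      _ = (((RatFunc.X : KK) ^ nE)⁻¹ • (σE * act (D.TK (w0 * x⁻¹)))) *
          (act (D.TK x) * act (((D.TK_unit x).unit⁻¹ : D.HKˣ) : D.HK)) := by rw [mul_assoc]
      _ = ((RatFunc.X : KK) ^ nE)⁻¹ • (σE * act (D.TK (w0 * x⁻¹))) := by rw [h2, mul_one]
  -- trace of dag of T_x
  have htrdag : ∀ x : W, LinearMap.trace KK V (act (dag (D.TK x))) =
      ((-1 : KK) ^ cs.length x) * (((RatFunc.X : KK) ^ nE)⁻¹ *
        LinearMap.trace KK V (σE * act (D.TK (w0 * x)))) := by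
    intro x
    rw [hdag x, map_zsmul, map_zsmul, hJ x⁻¹, inv_inv, map_smul]
    simp only [zsmul_eq_mul, smul_eq_mul]
    push_cast
    ring
  -- σ-twisted trace symmetry
  have hgsym : ∀ y : W, LinearMap.trace KK V (σE * act (D.TK (w0 * y⁻¹))) =
      LinearMap.trace KK V (act (D.TK (y⁻¹ * w0)) * σE) := by
    intro y
    have h := hσ (y⁻¹ * w0)
    have e : w0 * (y⁻¹ * w0) * w0 = w0 * y⁻¹ := by
      rw [mul_assoc, mul_assoc, D.w0_sq, mul_one]
    rw [e] at h
    rw [LinearMap.trace_mul_comm, ← h, LinearMap.trace_mul_comm]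
  -- the main sum identity
  have step1 : fE' * (Module.finrank KK V : KK) =
      ∑ x : W, LinearMap.trace KK V (act (dag (D.TK x))) *
        LinearMap.trace KK V (act (dag (D.TK x⁻¹))) := by
    calc fE' * (Module.finrank KK V : KK) = fE' * (Module.finrank KK V' : KK) := by rw [hfin]
      _ = ∑ x : W, LinearMap.trace KK V' (act' (D.TK x)) *
          LinearMap.trace KK V' (act' (D.TK x⁻¹)) := hfE'.symm
      _ = _ := by
          apply Finset.sum_congr rfl
          intro x _
          rw [htr', htr']
  have step2 : ∀ x : W, LinearMap.trace KK V (act (dag (D.TK x))) *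
      LinearMap.trace KK V (act (dag (D.TK x⁻¹))) =
      ((RatFunc.X : KK) ^ nE)⁻¹ * ((RatFunc.X : KK) ^ nE)⁻¹ *
        (LinearMap.trace KK V (σE * act (D.TK (w0 * x))) *
          LinearMap.trace KK V (σE * act (D.TK (w0 * x⁻¹)))) := by
    intro x
    have hmm : ((-1 : KK) ^ cs.length x) * ((-1 : KK) ^ cs.length x⁻¹) = 1 := by
      rw [cs.length_inv, ← pow_add]
      exact Even.neg_one_pow ⟨cs.length x, rfl⟩
    rw [htrdag x, htrdag x⁻¹]
    calc ((-1 : KK) ^ cs.length x) * (((RatFunc.X : KK) ^ nE)⁻¹ *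
          LinearMap.trace KK V (σE * act (D.TK (w0 * x)))) *
        (((-1 : KK) ^ cs.length x⁻¹) * (((RatFunc.X : KK) ^ nE)⁻¹ *
          LinearMap.trace KK V (σE * act (D.TK (w0 * x⁻¹)))))
        = (((-1 : KK) ^ cs.length x) * ((-1 : KK) ^ cs.length x⁻¹)) *
          (((RatFunc.X : KK) ^ nE)⁻¹ * ((RatFunc.X : KK) ^ nE)⁻¹ *
          (LinearMap.trace KK V (σE * act (D.TK (w0 * x))) *
            LinearMap.trace KK V (σE * act (D.TK (w0 * x⁻¹))))) := by ring
      _ = _ := by rw [hmm, one_mul]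
  have step3 : ∑ x : W, LinearMap.trace KK V (σE * act (D.TK (w0 * x))) *
      LinearMap.trace KK V (σE * act (D.TK (w0 * x⁻¹))) = Sfun D V act σE σE := by
    have hbij : Function.Bijective (fun x : W => w0 * x) := by
      apply Function.Involutive.bijective
      intro x
      simp only [← mul_assoc, D.w0_sq, one_mul]
    refine Fintype.sum_bijective _ hbij _ _ ?_
    intro x
    show LinearMap.trace KK V (σE * act (D.TK (w0 * x))) *
        LinearMap.trace KK V (σE * act (D.TK (w0 * x⁻¹))) =
      LinearMap.trace KK V (σE * act (D.TK (w0 * x))) *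
        LinearMap.trace KK V (act (D.TK (w0 * x)⁻¹) * σE)
    congr 1
    rw [hgsym x, mul_inv_rev, hw0inv]
  have hS11 : Sfun D V act 1 1 = fE * (Module.finrank KK V : KK) := by
    unfold Sfun
    rw [← hfE]
    apply Finset.sum_congr rfl
    intro x _
    rw [one_mul, mul_one]
  have main : fE' * (Module.finrank KK V : KK) =
      ((RatFunc.X : KK) ^ nE)⁻¹ * ((RatFunc.X : KK) ^ nE)⁻¹ *
        (fE * (Module.finrank KK V : KK)) := by
    rw [step1]
    calc ∑ x : W, LinearMap.trace KK V (act (dag (D.TK x))) *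
          LinearMap.trace KK V (act (dag (D.TK x⁻¹)))
        = ∑ x : W, ((RatFunc.X : KK) ^ nE)⁻¹ * ((RatFunc.X : KK) ^ nE)⁻¹ *
            (LinearMap.trace KK V (σE * act (D.TK (w0 * x))) *
              LinearMap.trace KK V (σE * act (D.TK (w0 * x⁻¹)))) := by
          exact Finset.sum_congr rfl fun x _ => step2 x
      _ = ((RatFunc.X : KK) ^ nE)⁻¹ * ((RatFunc.X : KK) ^ nE)⁻¹ *
          ∑ x : W, LinearMap.trace KK V (σE * act (D.TK (w0 * x))) *
            LinearMap.trace KK V (σE * act (D.TK (w0 * x⁻¹))) := by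
          rw [Finset.mul_sum]
      _ = ((RatFunc.X : KK) ^ nE)⁻¹ * ((RatFunc.X : KK) ^ nE)⁻¹ *
          (fE * (Module.finrank KK V : KK)) := by
          rw [step3, Sσσ D V act σE hσsq nE hlam, hS11]
  have hCZ : CharZero KK := charZero_of_injective_algebraMap (algebraMap ℂ KK).injective
  have hd0 : (Module.finrank KK V : KK) ≠ 0 := by
    have : 0 < Module.finrank KK V := Module.finrank_pos
    exact_mod_cast Nat.cast_ne_zero.mpr this.ne'
  have hrel : ((RatFunc.X : KK) ^ nE) * ((RatFunc.X : KK) ^ nE) * fE' = fE := by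
    have h1 : fE' = ((RatFunc.X : KK) ^ nE)⁻¹ * ((RatFunc.X : KK) ^ nE)⁻¹ * fE :=
      mul_right_cancel₀ hd0 (by rw [main]; ring)
    rw [h1]
    field_simp
  obtain ⟨p, hp0, hp⟩ := haE
  obtain ⟨p', hp0', hp'⟩ := haE'
  exact endgame fE fE' nE aE aE' hrel p p' hp0 hp0' hp hp'

end
end
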